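/- arXiv:math/0611091 — 4 statements merged into one kernel-verified Lean document; each statement's English description precedes it below -/
import Mathlib

section
/- On the classical 37-hole French solitaire board, the problem 'vacate the central hole and play to leave a single peg in the central hole' is unsolvable: no sequence of jumps starting from all holes occupied except the centre ends with a single peg at the centre. -/
/-- The four orthogonal unit directions. -/
def dirs : Finset (ℤ × ℤ) := {(1,0), (-1,0), (0,1), (0,-1)}

/-- `(A, B, C)` is a jump triple on board `T`: three collinear adjacent holes,
with `B = A + d` and `C = A + 2d` for a unit direction `d`. -/
def IsJumpTriple (T : Finset (ℤ × ℤ)) (A B C : ℤ × ℤ) : Prop :=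
  A ∈ T ∧ B ∈ T ∧ C ∈ T ∧ ∃ d ∈ dirs, B = A + d ∧ C = A + d + d

/-- A single peg-solitaire jump: the peg at `A` jumps over the peg at `B`
into the empty hole `C`, removing the peg at `B`. -/
def Jump (T : Finset (ℤ × ℤ)) (P Q : Finset (ℤ × ℤ)) : Prop :=
  ∃ A B C, IsJumpTriple T A B C ∧ A ∈ P ∧ B ∈ P ∧ C ∉ P ∧
    Q = (P \ {A, B}) ∪ {C}

/-- The classical 37-hole French solitaire board. -/
noncomputable def frenchBoard : Finset (ℤ × ℤ) :=
  (Finset.Icc (0:ℤ) 6 ×ˢ Finset.Icc (0:ℤ) 6).filter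
    (fun p => (2 ≤ p.1 ∧ p.1 ≤ 4) ∨ (2 ≤ p.2 ∧ p.2 ≤ 4) ∨
      p ∈ ({(1,1), (1,5), (5,1), (5,5)} : Finset (ℤ × ℤ)))

/-!
Colour the holes by the diagonal `(x + y) mod 3` and give weight `1 ∈ ZMod 2` to the
diagonals `0` and `1`, weight `0` to the diagonal `2`. The three holes of a jump lie on three
distinct diagonals, so the weights of the two emptied holes add up to the weight of the filled
one, and the total weight of the pegs is invariant. It is `0` for the full board minus the centre
(`24` weighted holes) but `1` for the single centre peg.
-/

open Finset

theorem ne_add_of_mem_dirs {d : ℤ × ℤ} (hd : d ∈ dirs) (A : ℤ × ℤ) : A ≠ A + d := by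
  fin_cases hd <;> simp [Prod.ext_iff]

section JumpInvariant

variable {G : Type*} [AddCommGroup G] {w : ℤ × ℤ → G} {T : Finset (ℤ × ℤ)}

theorem sum_eq_of_jump (hw : ∀ A B C, IsJumpTriple T A B C → w C = w A + w B)
    {P Q : Finset (ℤ × ℤ)} (h : Jump T P Q) : ∑ p ∈ Q, w p = ∑ p ∈ P, w p := by
  obtain ⟨A, B, C, hABC, hA, hB, hC, rfl⟩ := h
  obtain ⟨-, -, -, d, hd, rfl, -⟩ := id hABC
  have hsub : ({A, A + d} : Finset (ℤ × ℤ)) ⊆ P := insert_subset hA (singleton_subset_iff.2 hB)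
  have hdisj : Disjoint (P \ {A, A + d}) {C} :=
    disjoint_singleton_right.2 fun hC' => hC (mem_sdiff.1 hC').1
  rw [sum_union hdisj, sum_sdiff_eq_sub hsub, sum_pair (ne_add_of_mem_dirs hd A),
    sum_singleton, hw _ _ _ hABC, sub_add_cancel]

theorem sum_eq_of_reflTransGen_jump (hw : ∀ A B C, IsJumpTriple T A B C → w C = w A + w B)
    {P Q : Finset (ℤ × ℤ)} (h : Relation.ReflTransGen (Jump T) P Q) :
    ∑ p ∈ Q, w p = ∑ p ∈ P, w p := by
  induction h with
  | refl => rfl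
  | tail _ hj ih => rw [sum_eq_of_jump hw hj, ih]

end JumpInvariant

def diagWeight (p : ℤ × ℤ) : ZMod 2 := if (p.1 + p.2) % 3 = 2 then 0 else 1

theorem diagWeight_jump {T : Finset (ℤ × ℤ)} {A B C : ℤ × ℤ} (h : IsJumpTriple T A B C) :
    diagWeight C = diagWeight A + diagWeight B := by
  obtain ⟨-, -, -, d, hd, rfl, rfl⟩ := h
  fin_cases hd <;>
  · simp only [diagWeight, Prod.fst_add, Prod.snd_add]
    split_ifs <;> first | decide | (exfalso; omega)

/-- on the 37-hole French board one cannot vacate the centre and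
play to leave a single peg in the centre. -/
theorem stmt_4 :
    ¬ Relation.ReflTransGen (Jump frenchBoard)
        (frenchBoard \ {((3:ℤ), (3:ℤ))}) {((3:ℤ), (3:ℤ))} := by
  intro h
  have hinv := sum_eq_of_reflTransGen_jump (w := diagWeight) (fun _ _ _ => diagWeight_jump) h
  have hend : ∑ p ∈ {((3:ℤ), (3:ℤ))}, diagWeight p = 1 := by decide
  have hstart : ∑ p ∈ frenchBoard \ {((3:ℤ), (3:ℤ))}, diagWeight p = 0 := by decide
  exact one_ne_zero (hend.symm.trans (hinv.trans hstart))
end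

section
/- If the region R = {e1, e2, e3} of the semi-Wiegleb board starts fully occupied and finishes empty, then the jump sequence contains at least two jumps that move a peg from inside R to outside R (jumps 'outwards across the boundary'). -/
/-- The 39-hole "semi-Wiegleb" board: columns a–g are x = 0..6, rows 1–9 are
y = 0..8; holes where `2 ≤ x ≤ 4` or `3 ≤ y ≤ 5`. -/
noncomputable def semiWieglebBoard : Finset (ℤ × ℤ) :=
  (Finset.Icc (0:ℤ) 6 ×ˢ Finset.Icc (0:ℤ) 8).filter
    (fun p => (2 ≤ p.1 ∧ p.1 ≤ 4) ∨ (3 ≤ p.2 ∧ p.2 ≤ 5))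

/-- `Play T P ms Q`: starting from position `P`, executing the list of jumps
`ms` (each given as a triple `(A, B, C)`: peg at `A` jumps over `B` into `C`)
is legal and ends in position `Q`. -/
def Play (T : Finset (ℤ × ℤ)) :
    Finset (ℤ × ℤ) → List ((ℤ × ℤ) × (ℤ × ℤ) × (ℤ × ℤ)) → Finset (ℤ × ℤ) → Prop
  | P, [], Q => P = Q
  | P, m :: ms, Q =>
      (IsJumpTriple T m.1 m.2.1 m.2.2 ∧ m.1 ∈ P ∧ m.2.1 ∈ P ∧ m.2.2 ∉ P) ∧
        Play T ((P \ {m.1, m.2.1}) ∪ {m.2.2}) ms Q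

/-- The region R = {e1, e2, e3} of the semi-Wiegleb board. -/
def regionR : Finset (ℤ × ℤ) := {(4,0), (4,1), (4,2)}


lemma memBoard (p : ℤ × ℤ) : p ∈ semiWieglebBoard ↔
    (0 ≤ p.1 ∧ p.1 ≤ 6 ∧ 0 ≤ p.2 ∧ p.2 ≤ 8) ∧ ((2 ≤ p.1 ∧ p.1 ≤ 4) ∨ (3 ≤ p.2 ∧ p.2 ≤ 5)) := by
  simp [semiWieglebBoard, Finset.mem_filter, Finset.mem_product, Finset.mem_Icc, and_assoc]

lemma memR (p : ℤ × ℤ) : p ∈ regionR ↔ p.1 = 4 ∧ (p.2 = 0 ∨ p.2 = 1 ∨ p.2 = 2) := by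
  obtain ⟨x, y⟩ := p
  simp only [regionR, Finset.mem_insert, Finset.mem_singleton, Prod.mk.injEq]
  omega

lemma geomR {A B C : ℤ × ℤ} (h : IsJumpTriple semiWieglebBoard A B C)
    (hB : B ∈ regionR) : A ∈ regionR ∨ C ∈ regionR := by
  obtain ⟨hA, hBT, hC, d, hd, hB1, hC1⟩ := h
  rw [memBoard] at hA hC
  rw [memR] at hB
  rw [memR, memR]
  simp only [dirs, Finset.mem_insert, Finset.mem_singleton] at hd
  obtain ⟨a1, a2⟩ := A; obtain ⟨b1, b2⟩ := B; obtain ⟨c1, c2⟩ := C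
  obtain ⟨d1, d2⟩ := d
  simp only [Prod.mk.injEq, Prod.mk_add_mk] at hd hB1 hC1 ⊢
  simp only at hA hC hB
  omega

lemma lemA (ms : List ((ℤ × ℤ) × (ℤ × ℤ) × (ℤ × ℤ))) :
    ∀ P Q : Finset (ℤ × ℤ), Play semiWieglebBoard P ms Q →
    (∃ r ∈ regionR, r ∈ P) → (∀ r ∈ regionR, r ∉ Q) →
    1 ≤ (ms.filter (fun m => m.1 ∈ regionR ∧ m.2.2 ∉ regionR)).length := by
  induction ms with
  | nil =>
    intro P Q hplay ⟨r, hr, hrP⟩ hempty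
    exact absurd (hplay ▸ hrP) (hempty r hr)
  | cons m ms ih =>
    intro P Q hplay ⟨r, hr, hrP⟩ hempty
    obtain ⟨⟨htrip, hA, hB, hC⟩, hrest⟩ := hplay
    by_cases hm : m.1 ∈ regionR ∧ m.2.2 ∉ regionR
    · simp [List.filter_cons, hm]
    · have hnext : ∃ r ∈ regionR, r ∈ (P \ {m.1, m.2.1}) ∪ {m.2.2} := by
        by_cases hc : m.2.2 ∈ regionR
        · exact ⟨m.2.2, hc, Finset.mem_union_right _ (Finset.mem_singleton_self _)⟩
        · have hA' : m.1 ∉ regionR := fun h => hm ⟨h, hc⟩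
          have hB' : m.2.1 ∉ regionR := fun h => by
            rcases geomR htrip h with h1 | h1
            · exact hA' h1
            · exact hc h1
          refine ⟨r, hr, Finset.mem_union_left _ ?_⟩
          rw [Finset.mem_sdiff]
          refine ⟨hrP, ?_⟩
          simp only [Finset.mem_insert, Finset.mem_singleton]
          rintro (rfl | rfl)
          · exact hA' hr
          · exact hB' hr
      have := ih _ _ hrest hnext hempty
      simp only [List.filter_cons]
      split
      · simp only [List.length_cons]; omega
      · exact this

lemma survivor (A B : ℤ × ℤ) : ∃ r ∈ regionR, r ≠ A ∧ r ≠ B := by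
  by_contra h
  push_neg at h
  have h0 := h (4,0) (by rw [memR]; simp)
  have h1 := h (4,1) (by rw [memR]; simp)
  have h2 := h (4,2) (by rw [memR]; simp)
  have h0' := or_iff_not_imp_left.mpr h0
  have h1' := or_iff_not_imp_left.mpr h1
  have h2' := or_iff_not_imp_left.mpr h2
  rcases h0' with rfl | rfl <;> rcases h1' with h1' | h1' <;> rcases h2' with h2' | h2' <;> simp_all
  all_goals exact absurd (h1'.trans h2'.symm) (by decide)

/-- boundary-crossing lemma: any jump sequence on the
semi-Wiegleb board from a position in which R = {e1,e2,e3} is fully occupied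
to one in which R is empty contains at least two jumps moving a peg from
inside R to outside R. -/
theorem stmt_14 (P Q : Finset (ℤ × ℤ))
    (ms : List ((ℤ × ℤ) × (ℤ × ℤ) × (ℤ × ℤ)))
    (hplay : Play semiWieglebBoard P ms Q)
    (hfull : regionR ⊆ P) (hempty : ∀ r ∈ regionR, r ∉ Q) :
    2 ≤ (ms.filter (fun m => m.1 ∈ regionR ∧ m.2.2 ∉ regionR)).length := by
  induction ms generalizing P with
  | nil =>
    exact absurd (hplay ▸ hfull (Finset.mem_insert_self _ _))
      (hempty (4,0) (Finset.mem_insert_self _ _))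
  | cons m ms ih =>
    obtain ⟨⟨htrip, hA, hB, hC⟩, hrest⟩ := hplay
    by_cases hm : m.1 ∈ regionR ∧ m.2.2 ∉ regionR
    · obtain ⟨r, hr, hrA, hrB⟩ := survivor m.1 m.2.1
      have hnext : ∃ r ∈ regionR, r ∈ (P \ {m.1, m.2.1}) ∪ {m.2.2} := by
        refine ⟨r, hr, Finset.mem_union_left _ ?_⟩
        rw [Finset.mem_sdiff]
        refine ⟨hfull hr, ?_⟩
        simp only [Finset.mem_insert, Finset.mem_singleton]
        rintro (rfl | rfl)
        · exact hrA rfl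
        · exact hrB rfl
      have htail := lemA ms _ _ hrest hnext hempty
      have hd : (decide (m.1 ∈ regionR ∧ m.2.2 ∉ regionR)) = true := decide_eq_true hm
      simp only [List.filter_cons, hd, if_true, List.length_cons]
      omega
    · have hc : m.2.2 ∉ regionR := fun h => hC (hfull h)
      have hA' : m.1 ∉ regionR := fun h => hm ⟨h, hc⟩
      have hB' : m.2.1 ∉ regionR := fun h => by
        rcases geomR htrip h with h1 | h1
        · exact hA' h1
        · exact hc h1
      have hfull' : regionR ⊆ (P \ {m.1, m.2.1}) ∪ {m.2.2} := by
        intro r hr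
        refine Finset.mem_union_left _ ?_
        rw [Finset.mem_sdiff]
        refine ⟨hfull hr, ?_⟩
        simp only [Finset.mem_insert, Finset.mem_singleton]
        rintro (rfl | rfl)
        · exact hA' hr
        · exact hB' hr
      have := ih _ hrest hfull'
      simp only [List.filter_cons]
      split
      · simp only [List.length_cons]; omega
      · exact this
end

section
/- On the 33-hole English board, the maximum length of any geometrically possible sweep is 16: there exists a position and a peg that can make 16 consecutive jumps, and no position admits a sweep of length 17 or more. -/
/-- `SweepFrom T k P a`: the peg currently at `a` can make `k` further
consecutive jumps starting from position `P`. -/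
def SweepFrom (T : Finset (ℤ × ℤ)) : ℕ → Finset (ℤ × ℤ) → (ℤ × ℤ) → Prop
  | 0, _, _ => True
  | k + 1, P, a =>
      ∃ B C, IsJumpTriple T a B C ∧ a ∈ P ∧ B ∈ P ∧ C ∉ P ∧
        SweepFrom T k ((P \ {a, B}) ∪ {C}) C

/-- `CanSweep T P k`: some peg of `P` can make a `k`-sweep (`k` consecutive jumps). -/
def CanSweep (T : Finset (ℤ × ℤ)) (P : Finset (ℤ × ℤ)) (k : ℕ) : Prop :=
  ∃ a ∈ P, SweepFrom T k P a

/-- The 33-hole English solitaire board. -/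
noncomputable def englishBoard : Finset (ℤ × ℤ) :=
  (Finset.Icc (0:ℤ) 6 ×ˢ Finset.Icc (0:ℤ) 6).filter
    (fun p => (2 ≤ p.1 ∧ p.1 ≤ 4) ∨ (2 ≤ p.2 ∧ p.2 ≤ 4))

/-! A sweeping peg moves two holes at a time, so the parity of `x + y` at its position never
changes, and the pegs it captures are distinct pegs on holes of the opposite parity, each the
middle of a line of three holes. On the English board there are 16 holes with `x + y` odd, and
only 9 holes with `x + y` even that are such middles, so no sweep is longer than 16. The loop of
16 jumps from `(2, 0)` around the centre attains the bound. -/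

/-- The holes of `T` that a peg starting at `a` could ever jump over. -/
def capturable (T : Finset (ℤ × ℤ)) (a : ℤ × ℤ) : Finset (ℤ × ℤ) :=
  T.filter fun b => ¬ 2 ∣ a.1 + a.2 + b.1 + b.2 ∧ ∃ d ∈ dirs, b - d ∈ T ∧ b + d ∈ T

lemma capturable_congr (T : Finset (ℤ × ℤ)) {a a' : ℤ × ℤ} (h : 2 ∣ a.1 + a.2 - (a'.1 + a'.2)) :
    capturable T a = capturable T a' := by
  refine Finset.filter_congr fun b _ => ?_
  have : 2 ∣ a.1 + a.2 + b.1 + b.2 ↔ 2 ∣ a'.1 + a'.2 + b.1 + b.2 := by omega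
  rw [this]

lemma not_two_dvd_sum_of_mem_dirs {d : ℤ × ℤ} (hd : d ∈ dirs) : ¬ 2 ∣ d.1 + d.2 := by
  simp only [dirs, Finset.mem_insert, Finset.mem_singleton] at hd
  rcases hd with rfl | rfl | rfl | rfl <;> decide

lemma mem_capturable_of_isJumpTriple {T : Finset (ℤ × ℤ)} {a B C : ℤ × ℤ}
    (hj : IsJumpTriple T a B C) : B ∈ capturable T a := by
  obtain ⟨haT, hBT, hCT, d, hd, rfl, rfl⟩ := hj
  have := not_two_dvd_sum_of_mem_dirs hd
  refine Finset.mem_filter.2 ⟨hBT, ?_, d, hd, by rwa [add_sub_cancel_right], hCT⟩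
  simp only [Prod.fst_add, Prod.snd_add]
  omega

lemma inter_capturable_of_isJumpTriple {T P : Finset (ℤ × ℤ)} {a B C : ℤ × ℤ}
    (hj : IsJumpTriple T a B C) :
    ((P \ {a, B}) ∪ {C}) ∩ capturable T C = (P ∩ capturable T a).erase B := by
  obtain ⟨-, -, -, d, -, rfl, rfl⟩ := hj
  rw [capturable_congr T (a' := a) (by simp only [Prod.fst_add, Prod.snd_add]; omega)]
  have ha : a ∉ capturable T a := fun h => (Finset.mem_filter.1 h).2.1 (by omega)
  have hC : a + d + d ∉ capturable T a := fun h =>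
    (Finset.mem_filter.1 h).2.1 (by simp only [Prod.fst_add, Prod.snd_add]; omega)
  ext b
  simp only [Finset.mem_inter, Finset.mem_union, Finset.mem_sdiff, Finset.mem_insert,
    Finset.mem_singleton, Finset.mem_erase]
  constructor
  · rintro ⟨(⟨hbP, hb⟩ | rfl), hcap⟩
    · exact ⟨fun h => hb (Or.inr h), hbP, hcap⟩
    · exact absurd hcap hC
  · rintro ⟨hbB, hbP, hcap⟩
    exact ⟨Or.inl ⟨hbP, by rintro (rfl | rfl) <;> contradiction⟩, hcap⟩

theorem le_card_inter_capturable {T : Finset (ℤ × ℤ)} {k : ℕ} {P : Finset (ℤ × ℤ)}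
    {a : ℤ × ℤ} (h : SweepFrom T k P a) : k ≤ (P ∩ capturable T a).card := by
  induction k generalizing P a with
  | zero => exact Nat.zero_le _
  | succ k ih =>
    obtain ⟨B, C, hj, -, hBP, -, hrest⟩ := h
    have hB : B ∈ P ∩ capturable T a := Finset.mem_inter.2 ⟨hBP, mem_capturable_of_isJumpTriple hj⟩
    have := ih hrest
    rw [inter_capturable_of_isJumpTriple hj, Finset.card_erase_of_mem hB] at this
    have := Finset.card_pos.2 ⟨B, hB⟩
    omega

lemma card_capturable_englishBoard_le (a : ℤ × ℤ) : (capturable englishBoard a).card ≤ 16 := by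
  rcases Int.even_or_odd (a.1 + a.2) with ⟨m, hm⟩ | ⟨m, hm⟩
  · rw [capturable_congr englishBoard (a' := (0, 0)) (by simp only; omega)]
    decide
  · rw [capturable_congr englishBoard (a' := (1, 0)) (by simp only; omega)]
    decide

/-- A decidable certificate for `SweepFrom`: the jump directions of the sweep, in order. -/
def sweepsAlong (T : Finset (ℤ × ℤ)) : List (ℤ × ℤ) → Finset (ℤ × ℤ) → ℤ × ℤ → Bool
  | [], _, _ => true
  | d :: ds, P, a =>
      decide (d ∈ dirs ∧ a ∈ T ∧ a + d ∈ T ∧ a + d + d ∈ T ∧ a ∈ P ∧ a + d ∈ P ∧ a + d + d ∉ P) &&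
        sweepsAlong T ds ((P \ {a, a + d}) ∪ {a + d + d}) (a + d + d)

lemma sweepFrom_of_sweepsAlong {T : Finset (ℤ × ℤ)} {ds : List (ℤ × ℤ)} {P : Finset (ℤ × ℤ)}
    {a : ℤ × ℤ} (h : sweepsAlong T ds P a) : SweepFrom T ds.length P a := by
  induction ds generalizing P a with
  | nil => trivial
  | cons d ds ih =>
    simp only [sweepsAlong, Bool.and_eq_true, decide_eq_true_eq] at h
    obtain ⟨⟨hd, haT, hBT, hCT, haP, hBP, hCP⟩, hrest⟩ := h
    exact ⟨a + d, a + d + d, ⟨haT, hBT, hCT, d, hd, rfl, rfl⟩, haP, hBP, hCP, ih hrest⟩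

lemma sweepsAlong_loop :
    sweepsAlong englishBoard
      [(1, 0), (0, 1), (1, 0), (0, 1), (-1, 0), (0, 1), (-1, 0), (0, -1),
        (-1, 0), (0, -1), (1, 0), (0, 1), (1, 0), (0, -1), (-1, 0), (0, -1)]
      {(2, 0), (3, 0), (4, 1), (5, 2), (6, 3), (5, 4), (4, 5), (3, 6), (2, 5),
        (1, 4), (0, 3), (1, 2), (2, 3), (3, 4), (4, 3), (3, 2), (2, 1)}
      (2, 0) := by
  decide

/-- on the English board the longest geometrically possible sweep
has length 16: some position admits a 16-sweep, and no position admits a sweep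
of length 17 or more. -/
theorem stmt_15 :
    (∃ P : Finset (ℤ × ℤ), P ⊆ englishBoard ∧ CanSweep englishBoard P 16) ∧
    (∀ k : ℕ, 17 ≤ k → ∀ P : Finset (ℤ × ℤ), P ⊆ englishBoard →
      ¬ CanSweep englishBoard P k) := by
  refine ⟨⟨_, by decide, (2, 0), by decide, sweepFrom_of_sweepsAlong sweepsAlong_loop⟩, ?_⟩
  rintro k hk P - ⟨a, -, hsweep⟩
  have := (le_card_inter_capturable hsweep).trans (Finset.card_le_card Finset.inter_subset_right)
  have := card_capturable_englishBoard_le a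
  omega
end

section
/- In any solution of 'vacate d1, finish at d1' on the 39-hole semi-Wiegleb board, the jump d8-d6 must occur and no jump whose jumped-over hole is d8 can occur; i.e., the only way d8 is vacated is by the peg at d8 itself jumping to d6. -/
abbrev Move := (ℤ × ℤ) × (ℤ × ℤ) × (ℤ × ℤ)

def jumpGain {G : Type*} [AddCommGroup G] (f : ℤ × ℤ → G) (m : Move) : G :=
  f m.2.2 - f m.1 - f m.2.1

theorem IsJumpTriple.fst_ne_snd {T : Finset (ℤ × ℤ)} {A B C : ℤ × ℤ}
    (h : IsJumpTriple T A B C) : A ≠ B := by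
  obtain ⟨-, -, -, d, hd, rfl, -⟩ := h
  intro hA
  rw [left_eq_add] at hA
  subst hA
  revert hd
  decide

theorem forall_isJumpTriple {T : Finset (ℤ × ℤ)} {R : Move → Prop}
    (h : ∀ A ∈ T, ∀ d ∈ dirs, A + d ∈ T → A + d + d ∈ T → R (A, A + d, A + d + d))
    (m : Move) (hm : IsJumpTriple T m.1 m.2.1 m.2.2) : R m := by
  obtain ⟨hA, hB, hC, d, hd, hb, hc⟩ := hm
  obtain ⟨A, B, C⟩ := m
  simp only at hb hc
  subst hb hc
  exact h A hA d hd hB hC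

namespace Play

variable {T : Finset (ℤ × ℤ)}

theorem isJumpTriple_of_mem {P Q : Finset (ℤ × ℤ)} {ms : List Move} (hplay : Play T P ms Q)
    {m : Move} (hm : m ∈ ms) : IsJumpTriple T m.1 m.2.1 m.2.2 := by
  induction ms generalizing P with
  | nil => simp at hm
  | cons a t ih =>
    rcases List.mem_cons.mp hm with rfl | hm
    · exact hplay.1.1
    · exact ih hplay.2 hm

theorem sum_eq {G : Type*} [AddCommGroup G] (f : ℤ × ℤ → G) {P Q : Finset (ℤ × ℤ)}
    {ms : List Move} (hplay : Play T P ms Q) :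
    ∑ p ∈ Q, f p = ∑ p ∈ P, f p + (ms.map (jumpGain f)).sum := by
  induction ms generalizing P with
  | nil => simp [hplay.symm]
  | cons m t ih =>
    obtain ⟨⟨htr, hA, hB, hC⟩, hrest⟩ := hplay
    have hsub : {m.1, m.2.1} ⊆ P := Finset.insert_subset hA (Finset.singleton_subset_iff.2 hB)
    have hdisj : Disjoint (P \ {m.1, m.2.1}) {m.2.2} :=
      Finset.disjoint_singleton_right.2 fun h => hC (Finset.mem_sdiff.1 h).1
    rw [ih hrest, Finset.sum_union hdisj, Finset.sum_sdiff_eq_sub hsub,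
      Finset.sum_pair htr.fst_ne_snd, Finset.sum_singleton, List.map_cons, List.sum_cons,
      jumpGain]
    abel

theorem card_eq {P Q : Finset (ℤ × ℤ)} {ms : List Move} (hplay : Play T P ms Q) :
    P.card = Q.card + ms.length := by
  have := hplay.sum_eq fun _ => (1 : ℤ)
  unfold jumpGain at this
  simp only [Finset.sum_const, Int.nsmul_eq_mul, mul_one, sub_self, zero_sub, List.map_const',
    List.sum_replicate, mul_neg] at this
  omega

theorem exists_mem_of_mem_of_notMem {P Q : Finset (ℤ × ℤ)} {ms : List Move}
    (hplay : Play T P ms Q) {h : ℤ × ℤ} (hP : h ∈ P) (hQ : h ∉ Q) :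
    ∃ m ∈ ms, m.1 = h ∨ m.2.1 = h := by
  induction ms generalizing P with
  | nil => exact absurd (hplay ▸ hP) hQ
  | cons m t ih =>
    by_cases hm : m.1 = h ∨ m.2.1 = h
    · exact ⟨m, List.mem_cons_self, hm⟩
    · push Not at hm
      have hP' : h ∈ (P \ {m.1, m.2.1}) ∪ {m.2.2} := by
        simp [hP, hm.1.symm, hm.2.symm]
      obtain ⟨m', hm', hh⟩ := ih hplay.2 hP'
      exact ⟨m', List.mem_cons_of_mem _ hm', hh⟩

theorem snd_snd_mem_of_concat {P Q : Finset (ℤ × ℤ)} {ms : List Move} {m : Move}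
    (hplay : Play T P (ms ++ [m]) Q) : m.2.2 ∈ Q := by
  induction ms generalizing P with
  | nil =>
    rw [← show _ = Q from hplay.2]
    exact Finset.mem_union_right _ (Finset.mem_singleton_self _)
  | cons a t ih => exact ih hplay.2

end Play

namespace SemiWiegleb

def pagoda (p : ℤ × ℤ) : ℤ :=
  if p = (3, 1) ∨ p = (3, 7) ∨ p = (1, 3) ∨ p = (3, 3) ∨ p = (5, 3) ∨ p = (1, 5) ∨ p = (3, 5) ∨
    p = (5, 5) then 1
  else if p = (0, 3) ∨ p = (6, 3) ∨ p = (0, 5) ∨ p = (6, 5) then -1 else 0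

def weight (p : ℤ × ℤ) : ℤ :=
  pagoda p + (if p = (3, 1) then 1 else 0) + (if p = (3, 2) then 1 else 0)

theorem weight_jumpGain_nonpos {m : Move}
    (hm : IsJumpTriple semiWieglebBoard m.1 m.2.1 m.2.2) : jumpGain weight m ≤ 0 :=
  forall_isJumpTriple (R := fun m => jumpGain weight m ≤ 0) (by decide) m hm

theorem weight_jumpGain_neg_of_snd_eq {m : Move}
    (hm : IsJumpTriple semiWieglebBoard m.1 m.2.1 m.2.2) (hB : m.2.1 = (3, 7)) :
    jumpGain weight m < 0 :=
  forall_isJumpTriple (R := fun m => m.2.1 = (3, 7) → jumpGain weight m < 0) (by decide) m hm hB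

theorem eq_of_snd_snd_eq {m : Move}
    (hm : IsJumpTriple semiWieglebBoard m.1 m.2.1 m.2.2) (hC : m.2.2 = (3, 0)) :
    m = ((3, 2), (3, 1), (3, 0)) :=
  forall_isJumpTriple (R := fun m => m.2.2 = (3, 0) → m = ((3, 2), (3, 1), (3, 0)))
    (by decide) m hm hC

theorem eq_of_fst_eq {m : Move}
    (hm : IsJumpTriple semiWieglebBoard m.1 m.2.1 m.2.2) (hA : m.1 = (3, 7)) :
    m = ((3, 7), (3, 6), (3, 5)) :=
  forall_isJumpTriple (R := fun m => m.1 = (3, 7) → m = ((3, 7), (3, 6), (3, 5)))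
    (by decide) m hm hA

theorem snd_ne_of_sum_weight_jumpGain_eq_zero {l : List Move}
    (hl : ∀ m ∈ l, IsJumpTriple semiWieglebBoard m.1 m.2.1 m.2.2)
    (h0 : (l.map (jumpGain weight)).sum = 0) : ∀ m ∈ l, m.2.1 ≠ (3, 7) := by
  intro m hm hB
  have := List.sum_lt_sum (jumpGain weight) (fun _ => 0)
    (fun m hm => weight_jumpGain_nonpos (hl m hm))
    ⟨m, hm, weight_jumpGain_neg_of_snd_eq (hl m hm) hB⟩
  simp [h0] at this

theorem exists_eq_cons_append_of_play {ms : List Move}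
    (hplay : Play semiWieglebBoard (semiWieglebBoard \ {(3, 0)}) ms {(3, 0)}) :
    ∃ mid, ms = ((3, 2), (3, 1), (3, 0)) :: (mid ++ [((3, 2), (3, 1), (3, 0))]) := by
  have hlen : ms.length = 37 := by
    have := hplay.card_eq
    rw [show (semiWieglebBoard \ {(3, 0)}).card = 38 by decide, Finset.card_singleton] at this
    omega
  obtain _ | ⟨m₀, rest⟩ := ms
  · simp at hlen
  obtain rfl | ⟨mid, m₁, rfl⟩ := List.eq_nil_or_concat' rest
  · simp at hlen
  have hm₀ := hplay.isJumpTriple_of_mem List.mem_cons_self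
  have hm₁ := hplay.isJumpTriple_of_mem (m := m₁) (by simp)
  refine ⟨mid, ?_⟩
  rw [eq_of_snd_snd_eq hm₀ (by simpa [hm₀.2.2.1] using hplay.1.2.2.2),
    eq_of_snd_snd_eq hm₁ (by simpa using hplay.2.snd_snd_mem_of_concat)]

end SemiWiegleb

open SemiWiegleb

/-- in any solution of "vacate d1, finish at d1" on the
semi-Wiegleb board, the jump d8-d6 (triple ((3,7),(3,6),(3,5))) occurs, and no
jump whose jumped-over hole is d8 = (3,7) occurs. -/
theorem stmt_19 (ms : List ((ℤ × ℤ) × (ℤ × ℤ) × (ℤ × ℤ)))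
    (hplay : Play semiWieglebBoard
      (semiWieglebBoard \ {((3:ℤ), (0:ℤ))}) ms {((3:ℤ), (0:ℤ))}) :
    (((3:ℤ),(7:ℤ)), (((3:ℤ),(6:ℤ)), ((3:ℤ),(5:ℤ)))) ∈ ms ∧
    ∀ m ∈ ms, m.2.1 ≠ ((3:ℤ), (7:ℤ)) := by
  have htriple := fun m (hm : m ∈ ms) => hplay.isJumpTriple_of_mem hm
  obtain ⟨mid, hms⟩ := exists_eq_cons_append_of_play hplay
  have hmid : (mid.map (jumpGain weight)).sum = 0 := by
    have := hplay.sum_eq weight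
    rw [hms, Finset.sum_singleton, show weight (3, 0) = 0 by decide,
      show ∑ p ∈ semiWieglebBoard \ {(3, 0)}, weight p = 6 by decide] at this
    simp only [List.map_cons, List.map_append, List.map_nil, List.sum_cons, List.sum_append,
      List.sum_nil, show jumpGain weight ((3, 2), (3, 1), (3, 0)) = -3 by decide] at this
    linarith
  have hover : ∀ m ∈ ms, m.2.1 ≠ (3, 7) := by
    simp only [hms, List.mem_cons, List.mem_append, List.not_mem_nil, or_false]
    rintro m (rfl | hm | rfl)
    · decide
    · exact snd_ne_of_sum_weight_jumpGain_eq_zero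
        (fun m hm => htriple m (by simp [hms, hm])) hmid m hm
    · decide
  refine ⟨?_, hover⟩
  obtain ⟨m, hm, hA | hB⟩ :=
    hplay.exists_mem_of_mem_of_notMem (h := (3, 7)) (by decide) (by decide)
  · rwa [← eq_of_fst_eq (htriple m hm) hA]
  · exact absurd hB (hover m hm)
end
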